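/- For every integer n ≥ 4, the unique real root λ_n larger than 1 of the polynomial Q_n(x) = x^n − 2(n−1)·Σ_{j=1}^{n−1} x^j + 1 satisfies 2n−1 − 1/(2n−1)^{n−2} < λ_n < 2n−1. -/
import Mathlib


open Polynomial in
/-- The polynomial `Q_n(x) = x^n − 2(n−1)·Σ_{j=1}^{n−1} x^j + 1`. -/
noncomputable def Qpoly (n : ℕ) : Polynomial ℝ :=
  X ^ n - C (2 * ((n : ℝ) - 1)) * (∑ j ∈ Finset.Icc 1 (n - 1), X ^ j) + 1

set_option maxHeartbeats 1000000 in
theorem stmt14 (n : ℕ) (hn : 4 ≤ n) (lam : ℝ)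
    (hlam : 1 < lam) (hroot : (Qpoly n).eval lam = 0) :
    2 * (n : ℝ) - 1 - 1 / (2 * (n : ℝ) - 1) ^ (n - 2) < lam ∧
      lam < 2 * (n : ℝ) - 1 := by
  have hN4 : (4:ℝ) ≤ (n:ℝ) := by exact_mod_cast hn
  set N : ℝ := (n:ℝ) with hNdef
  set a : ℝ := 2 * N - 1 with hadef
  have ha7 : (7:ℝ) ≤ a := by rw [hadef]; linarith
  set s : ℝ := ∑ j ∈ Finset.range n, lam ^ j with hsdef
  have hgeom : s * (lam - 1) = lam ^ n - 1 := geom_sum_mul lam n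
  clear_value N a s
  have hins : Finset.range n = insert 0 (Finset.Icc 1 (n - 1)) := by
    ext j; simp [Finset.mem_Icc]; omega
  have hsplit : s = 1 + ∑ j ∈ Finset.Icc 1 (n - 1), lam ^ j := by
    rw [hsdef, hins, Finset.sum_insert (by simp), pow_zero]
  have heval : lam ^ n - 2 * (N - 1) * (s - 1) + 1 = 0 := by
    have h := hroot
    simp only [Qpoly, Polynomial.eval_add, Polynomial.eval_sub, Polynomial.eval_pow,
      Polynomial.eval_X, Polynomial.eval_one, Polynomial.eval_mul, Polynomial.eval_C,
      Polynomial.eval_finset_sum] at h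
    rw [hsplit, ← hNdef] at *
    rw [← hNdef] at h
    ring_nf
    ring_nf at h
    linarith [h]
  have hkey : s * (a - lam) = a + 1 := by
    rw [hadef]; linear_combination -heval - hgeom
  have hlamn1 : (1:ℝ) < lam ^ n := one_lt_pow₀ hlam (by omega)
  have hspos : (0:ℝ) < s := by nlinarith [hgeom]
  have hupper : lam < a := by
    by_contra hc; push_neg at hc
    nlinarith [mul_nonpos_of_nonneg_of_nonpos hspos.le (by linarith : a - lam ≤ 0)]
  -- Step 1: lam > a - 1
  have hslb : 1 + (N - 1) * lam ≤ s := by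
    have hterm : ∀ j ∈ Finset.Icc 1 (n-1), lam ≤ lam ^ j := by
      intro j hj
      rw [Finset.mem_Icc] at hj
      calc lam = lam ^ 1 := (pow_one lam).symm
        _ ≤ lam ^ j := pow_le_pow_right₀ hlam.le hj.1
    have hsum := Finset.card_nsmul_le_sum (Finset.Icc 1 (n-1)) (fun j => lam ^ j) lam hterm
    have hcard : (Finset.Icc 1 (n-1)).card = n - 1 := by
      rw [Nat.card_Icc]; omega
    rw [hcard, nsmul_eq_mul] at hsum
    have hcast : ((n - 1 : ℕ) : ℝ) = N - 1 := by
      rw [hNdef]; push_cast [Nat.cast_sub (by omega : 1 ≤ n)]; ring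
    rw [hcast] at hsum
    rw [hsplit]
    linarith
  have hlow1 : a - 1 < lam := by
    by_contra hc; push_neg at hc
    have h1 : (1 + (N - 1) * lam) * (a - lam) ≤ s * (a - lam) :=
      mul_le_mul_of_nonneg_right hslb (by linarith)
    rw [hadef] at hc h1 hkey
    nlinarith [mul_nonneg (mul_nonneg (by linarith : (0:ℝ) ≤ N - 1)
      (by linarith : (0:ℝ) ≤ lam - 1)) (by linarith : (0:ℝ) ≤ 2*N - 2 - lam),
      mul_nonneg (by linarith : (0:ℝ) ≤ N) (by linarith : (0:ℝ) ≤ N - 3)]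
  -- Step 2
  refine ⟨?_, hupper⟩
  by_contra hc; push_neg at hc
  set t : ℝ := a - lam with htdef
  clear_value t
  have htpos : 0 < t := by rw [htdef]; linarith
  have ht1 : t < 1 := by rw [htdef]; linarith
  set B : ℝ := a ^ (n - 3) with hBdef
  clear_value B
  have hBpos : 0 < B := by rw [hBdef]; positivity
  have hBa : a ≤ B := by
    rw [hBdef]
    calc a = a ^ 1 := (pow_one a).symm
      _ ≤ a ^ (n-3) := pow_le_pow_right₀ (by linarith) (by omega)
  have hp2 : a ^ (n-2) = a * B := by
    rw [hBdef, ← pow_succ']; congr 1; omega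
  have hp1 : a ^ (n-1) = a^2 * B := by
    rw [hBdef, ← pow_add]; congr 1; omega
  have hp0 : a ^ n = a^3 * B := by
    rw [hBdef, ← pow_add]; congr 1; omega
  have htB : 1 ≤ t * (a * B) := by
    rw [← hp2]
    have h2 : 1 / a ^ (n-2) ≤ t := by rw [htdef]; linarith
    rw [div_le_iff₀ (by positivity)] at h2
    linarith
  -- binomial bound
  have hbin : a ^ n - lam ^ n ≤ N * (a^2 * B) * t := by
    have hgs := geom_sum₂_mul a lam n
    have hsum : (∑ i ∈ Finset.range n, a^i * lam^(n-1-i)) ≤ (n:ℝ) * a^(n-1) := by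
      have := Finset.sum_le_card_nsmul (Finset.range n) (fun i => a^i * lam^(n-1-i))
        (a^(n-1)) (by
          intro i hi
          rw [Finset.mem_range] at hi
          have h1 : lam ^ (n-1-i) ≤ a ^ (n-1-i) :=
            pow_le_pow_left₀ (by linarith) hupper.le _
          calc a^i * lam^(n-1-i) ≤ a^i * a^(n-1-i) :=
                mul_le_mul_of_nonneg_left h1 (by positivity)
            _ = a^(n-1) := by rw [← pow_add]; congr 1; omega)
      rw [Finset.card_range, nsmul_eq_mul] at this
      exact this
    calc a ^ n - lam ^ n = (∑ i ∈ Finset.range n, a^i * lam^(n-1-i)) * (a - lam) := hgs.symm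
      _ ≤ ((n:ℝ) * a^(n-1)) * t := by
          rw [← htdef]
          exact mul_le_mul_of_nonneg_right hsum htpos.le
      _ = N * (a^2 * B) * t := by rw [hp1, hNdef]
  have hlamn : a^3 * B - N * (a^2 * B) * t ≤ lam ^ n := by
    rw [← hp0]; linarith
  have hQ : (lam ^ n - 1) * t = (a + 1) * (lam - 1) := by
    linear_combination (-t) * hgeom + (lam - 1) * hkey
  -- final contradiction
  have h1 : (0:ℝ) ≤ N * a * B * ((t * (a * B) - 1) * (1 - t)) := by
    have := mul_nonneg (by linarith : (0:ℝ) ≤ t * (a * B) - 1) (by linarith : (0:ℝ) ≤ 1 - t)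
    have hNaB : (0:ℝ) ≤ N * a * B := by positivity
    exact mul_nonneg hNaB this
  have h2 : (0:ℝ) ≤ (N - 1) * ((t * (a * B) - 1) * (a * B - 1)) := by
    have := mul_nonneg (by linarith : (0:ℝ) ≤ t * (a * B) - 1)
      (by nlinarith : (0:ℝ) ≤ a * B - 1)
    exact mul_nonneg (by linarith) this
  have hG : 0 < (lam ^ n - 1) * t - (a + 1) * (lam - 1) := by
    have hmono : (a^3 * B - N * (a^2 * B) * t - 1) * t ≤ (lam ^ n - 1) * t :=
      mul_le_mul_of_nonneg_right (by linarith) htpos.le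
    have hlam_eq : lam = a - t := by rw [htdef]; ring
    have hid : B * ((a^3 * B - N * (a^2 * B) * t - 1) * t - (a + 1) * (a - t - 1))
        = N * a * B * ((t * (a * B) - 1) * (1 - t))
          + (N - 1) * ((t * (a * B) - 1) * (a * B - 1)) + (B - N + 1) := by
      rw [hadef]; ring
    have h3 : 0 < B - N + 1 := by linarith
    have h4 : 0 < B * ((a^3 * B - N * (a^2 * B) * t - 1) * t - (a + 1) * (a - t - 1)) := by
      rw [hid]; linarith
    have hGpoly : 0 < (a^3 * B - N * (a^2 * B) * t - 1) * t - (a + 1) * (a - t - 1) := by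
      by_contra hg; push_neg at hg
      nlinarith [mul_nonpos_of_nonneg_of_nonpos hBpos.le hg]
    have h5 : (a + 1) * (lam - 1) = (a + 1) * (a - t - 1) := by rw [htdef]; ring
    linarith [hmono, hGpoly]
  linarith [hQ, hG]
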